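/- Let (Ω, 𝔽, ℙ) be a probability space, H a separable complex Hilbert space, and (Ψ_k)_{k∈ℕ} an i.i.d. sequence of strongly measurable random operators on H taking values in positive contractions, satisfying the coercivity condition 𝔼‖Ψ_k x‖² ≥ C‖x‖² for all x ∈ H with a constant 0 < C < 1. With R₀ = I and R_n = (I − Ψ_n)⋯(I − Ψ₁), for every x ∈ H and every δ > 0 one has Σ_{n=0}^{∞} ℙ(‖R_n x‖ > δ) ≤ ‖x‖² / (δ² C) < ∞. -/

import Mathlib

/-!
For a positive contraction `T`, both `T` and `1 - T` satisfy `‖S y‖² ≤ re ⟪y, S y⟫`, hence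
`‖(1 - T) y‖² + ‖T y‖² ≤ ‖y‖²`. As `R_n x` is a function of `Ψ₁, …, Ψ_n`, it is independent of
`Ψ_{n+1}`, so integrating the coercivity bound against the law of `R_n x` (Fubini) gives
`𝔼‖Ψ_{n+1} R_n x‖² ≥ C 𝔼‖R_n x‖²`. Therefore `𝔼‖R_{n+1} x‖² ≤ (1 - C) 𝔼‖R_n x‖²`, i.e.
`𝔼‖R_n x‖² ≤ (1 - C)ⁿ ‖x‖²`, and Chebyshev's inequality summed over the geometric series gives
the bound `‖x‖² / (δ² C)`.
-/

open MeasureTheory ProbabilityTheory Filter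

/-- The σ-algebra on `B(H)` generated by the point evaluations `T ↦ T x`, i.e. the σ-algebra
corresponding to measurability in the strong operator sense. -/
noncomputable def strongMS (H : Type*) [NormedAddCommGroup H] [InnerProductSpace ℂ H] :
    MeasurableSpace (H →L[ℂ] H) :=
  ⨆ x : H, (borel H).comap fun T => T x

/-- The residual products `R₀ = I`, `R_n(ω) = (I - Ψ_n(ω))⋯(I - Ψ₁(ω))`.
Random operators are indexed starting from `1`, i.e. `Ψ 1, Ψ 2, …`. -/
noncomputable def residualProd {Ω H : Type*} [NormedAddCommGroup H] [InnerProductSpace ℂ H]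
    (Ψ : ℕ → Ω → (H →L[ℂ] H)) (ω : Ω) : ℕ → (H →L[ℂ] H)
  | 0 => 1
  | n + 1 => (1 - Ψ (n + 1) ω) * residualProd Ψ ω n

open scoped ENNReal InnerProductSpace

namespace ContinuousLinearMap

variable {H : Type*} [NormedAddCommGroup H] [InnerProductSpace ℂ H] [CompleteSpace H]
  {T : H →L[ℂ] H}

theorem norm_apply_sq_le_re_inner (hT0 : 0 ≤ T) (hT1 : T ≤ 1) (y : H) :
    ‖T y‖ ^ 2 ≤ RCLike.re ⟪y, T y⟫_ℂ := by
  have hsq : T ^ 2 ≤ T := by simpa using CStarAlgebra.pow_antitone hT0 hT1 one_le_two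
  have hnonneg := ((le_def _ _).mp hsq).re_inner_nonneg_right y
  have hsymm : ⟪y, T (T y)⟫_ℂ = ⟪T y, T y⟫_ℂ :=
    (isSelfAdjoint_iff_isSymmetric.mp ((nonneg_iff_isPositive T).mp hT0).isSelfAdjoint
      y (T y)).symm
  rw [sub_apply, pow_two, mul_apply_eq_comp, inner_sub_right, map_sub, hsymm,
    inner_self_eq_norm_sq] at hnonneg
  linarith

theorem norm_one_sub_apply_sq_add_norm_apply_sq_le (hT0 : 0 ≤ T) (hT1 : T ≤ 1) (y : H) :
    ‖(1 - T) y‖ ^ 2 + ‖T y‖ ^ 2 ≤ ‖y‖ ^ 2 := by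
  have h₁ := norm_apply_sq_le_re_inner (sub_nonneg.mpr hT1) (sub_le_self 1 hT0) y
  have h₂ := norm_apply_sq_le_re_inner hT0 hT1 y
  rw [sub_apply, one_apply_eq_self, inner_sub_right, map_sub, inner_self_eq_norm_sq] at h₁
  rw [sub_apply, one_apply_eq_self]
  linarith

theorem norm_one_sub_apply_le (hT0 : 0 ≤ T) (hT1 : T ≤ 1) (y : H) : ‖(1 - T) y‖ ≤ ‖y‖ := by
  have := norm_one_sub_apply_sq_add_norm_apply_sq_le hT0 hT1 y
  exact pow_le_pow_iff_left₀ (norm_nonneg _) (norm_nonneg _) two_ne_zero |>.mp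
    (by linarith [sq_nonneg ‖T y‖])

end ContinuousLinearMap

theorem ProbabilityTheory.IndepFun.lintegral_comp_eq_lintegral_map_lintegral
    {Ω α β : Type*} {mΩ : MeasurableSpace Ω} {mα : MeasurableSpace α} {mβ : MeasurableSpace β}
    {μ : Measure Ω} [IsFiniteMeasure μ] {X : Ω → α} {Y : Ω → β} (hXY : IndepFun X Y μ)
    (hX : Measurable X) (hY : Measurable Y) {f : α × β → ℝ≥0∞} (hf : Measurable f) :
    ∫⁻ ω, f (X ω, Y ω) ∂μ = ∫⁻ y, ∫⁻ ω, f (X ω, y) ∂μ ∂(μ.map Y) := by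
  rw [← lintegral_map hf (hX.prodMk hY),
    (indepFun_iff_map_prod_eq_prod_map_map hX.aemeasurable hY.aemeasurable).mp hXY,
    lintegral_prod_symm _ hf.aemeasurable]
  exact lintegral_congr fun y => lintegral_map (hf.comp measurable_prodMk_right) hX

theorem ofReal_integral_norm_sq_le_lintegral_enorm_sq {α E : Type*} {mα : MeasurableSpace α}
    [NormedAddCommGroup E] {μ : Measure α} {Z : α → E} (hZ : AEStronglyMeasurable Z μ) :
    ENNReal.ofReal (∫ a, ‖Z a‖ ^ 2 ∂μ) ≤ ∫⁻ a, ‖Z a‖ₑ ^ 2 ∂μ := by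
  rw [integral_eq_lintegral_of_nonneg_ae (f := fun a => ‖Z a‖ ^ 2)
    (ae_of_all _ fun _ => by positivity) (hZ.norm.pow 2)]
  simp only [ENNReal.ofReal_pow (norm_nonneg _), ofReal_norm]
  exact ENNReal.ofReal_toReal_le

theorem meas_lt_norm_le_lintegral_enorm_sq_div {Ω E : Type*} {mΩ : MeasurableSpace Ω}
    [NormedAddCommGroup E] {μ : Measure Ω} {Y : Ω → E} (hY : AEStronglyMeasurable Y μ) {δ : ℝ}
    (hδ : 0 < δ) :
    μ {ω | δ < ‖Y ω‖} ≤ (∫⁻ ω, ‖Y ω‖ₑ ^ 2 ∂μ) / ENNReal.ofReal δ ^ 2 := by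
  refine (measure_mono fun ω (hω : δ < ‖Y ω‖) => ?_).trans
    (meas_ge_le_lintegral_div (hY.enorm.pow_const 2) (by positivity) (by simp))
  rw [Set.mem_ofPred_eq, ← ofReal_norm]
  exact pow_le_pow_left₀ zero_le (ENNReal.ofReal_le_ofReal hω.le) 2

theorem ENNReal.le_one_sub_mul_of_add_le_of_mul_le {a b c d : ℝ≥0∞} (h : a + b ≤ d)
    (hc : c * d ≤ b) (hd : d ≠ ⊤) : a ≤ (1 - c) * d := by
  rw [ENNReal.sub_mul fun _ _ => hd, one_mul]
  exact (ENNReal.le_sub_of_add_le_right (ne_top_of_le_ne_top hd (le_add_self.trans h)) h).trans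
    (tsub_le_tsub_left hc d)

section ResidualProd

variable {Ω H : Type*} [NormedAddCommGroup H] [InnerProductSpace ℂ H]

theorem residualProd_zero_apply (Ψ : ℕ → Ω → H →L[ℂ] H) (ω : Ω) (x : H) :
    residualProd Ψ ω 0 x = x := rfl

theorem residualProd_succ_apply (Ψ : ℕ → Ω → H →L[ℂ] H) (ω : Ω) (n : ℕ) (x : H) :
    residualProd Ψ ω (n + 1) x = (1 - Ψ (n + 1) ω) (residualProd Ψ ω n x) := rfl

theorem norm_residualProd_apply_le [CompleteSpace H] {Ψ : ℕ → Ω → H →L[ℂ] H}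
    (hpos : ∀ k ω, 0 ≤ Ψ k ω) (hcontr : ∀ k ω, Ψ k ω ≤ 1) (ω : Ω) (n : ℕ) (x : H) :
    ‖residualProd Ψ ω n x‖ ≤ ‖x‖ := by
  induction n with
  | zero => rfl
  | succ n ih =>
    exact (ContinuousLinearMap.norm_one_sub_apply_le (hpos _ _) (hcontr _ _) _).trans ih

theorem lintegral_enorm_residualProd_apply_sq_ne_top [CompleteSpace H] {mΩ : MeasurableSpace Ω}
    (μ : Measure Ω) [IsFiniteMeasure μ] {Ψ : ℕ → Ω → H →L[ℂ] H} (hpos : ∀ k ω, 0 ≤ Ψ k ω)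
    (hcontr : ∀ k ω, Ψ k ω ≤ 1) (x : H) (n : ℕ) :
    ∫⁻ ω, ‖residualProd Ψ ω n x‖ₑ ^ 2 ∂μ ≠ ⊤ := by
  refine ne_top_of_le_ne_top (b := ∫⁻ _, ‖x‖ₑ ^ 2 ∂μ) ?_ (lintegral_mono fun ω => ?_)
  · simp [lintegral_const, ENNReal.mul_eq_top]
  · have := enorm_le_iff_norm_le.mpr (norm_residualProd_apply_le hpos hcontr ω n x)
    exact pow_le_pow_left₀ zero_le this 2

end ResidualProd

section StrongMeasurability

variable {Ω H : Type*} {mΩ : MeasurableSpace Ω} [NormedAddCommGroup H] [InnerProductSpace ℂ H]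
  [MeasurableSpace H] [BorelSpace H]

theorem measurable_strongMS_iff {f : Ω → H →L[ℂ] H} :
    Measurable[mΩ, strongMS H] f ↔ ∀ y, Measurable fun ω => f ω y := by
  simp only [measurable_iff_comap_le, strongMS, MeasurableSpace.comap_iSup, iSup_le_iff,
    MeasurableSpace.comap_comp, ← BorelSpace.measurable_eq]
  rfl

theorem measurable_apply_strongMS (y : H) : Measurable[strongMS H] fun T : H →L[ℂ] H => T y :=
  measurable_strongMS_iff.mp measurable_id y

theorem measurable_apply_prod_strongMS [TopologicalSpace.SeparableSpace H] :
    Measurable[(strongMS H).prod ‹_›] fun p : (H →L[ℂ] H) × H => p.1 p.2 := by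
  let := strongMS H
  have : SecondCountableTopology H := UniformSpace.secondCountable_of_separable H
  exact (measurable_uncurry_of_continuous_of_measurable (u := fun y (T : H →L[ℂ] H) => T y)
    (fun T => T.continuous) measurable_apply_strongMS).comp measurable_swap

theorem measurable_residualProd_apply_iSup_comap [TopologicalSpace.SeparableSpace H]
    (Ψ : ℕ → Ω → H →L[ℂ] H) (x : H) (n : ℕ) :
    Measurable[⨆ i ∈ Set.Iic n, (strongMS H).comap (Ψ i)] fun ω => residualProd Ψ ω n x := by
  induction n with
  | zero => exact measurable_const
  | succ n ih =>
    let := strongMS H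
    set 𝔉 := ⨆ i ∈ Set.Iic (n + 1), (strongMS H).comap (Ψ i)
    have hmono : (⨆ i ∈ Set.Iic n, (strongMS H).comap (Ψ i)) ≤ 𝔉 :=
      biSup_mono fun i hi => le_trans hi n.le_succ
    have hΨ : Measurable[𝔉] (Ψ (n + 1)) :=
      measurable_iff_comap_le.mpr
        (le_biSup (fun i => (strongMS H).comap (Ψ i)) (Set.mem_Iic.mpr le_rfl))
    have hY : Measurable[𝔉] fun ω => residualProd Ψ ω n x := ih.mono hmono le_rfl
    simp only [residualProd_succ_apply, sub_apply, one_apply_eq_self]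
    exact hY.sub (measurable_apply_prod_strongMS.comp (hΨ.prodMk hY))

theorem indepFun_residualProd_apply [TopologicalSpace.SeparableSpace H] {μ : Measure Ω}
    {Ψ : ℕ → Ω → H →L[ℂ] H} (hΨ : ∀ k, Measurable[mΩ, strongMS H] (Ψ k))
    (hindep : iIndepFun (m := fun _ : ℕ => strongMS H) Ψ μ) (x : H) (n : ℕ) :
    @IndepFun Ω _ _ _ (strongMS H) _ (Ψ (n + 1)) (fun ω => residualProd Ψ ω n x) μ := by
  let := strongMS H
  have hdisj : Disjoint ({n + 1} : Set ℕ) (Set.Iic n) := by simp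
  have h := indep_iSup_of_disjoint (fun i => (hΨ i).comap_le)
    ((iIndepFun_iff_iIndep _ _ _).mp hindep) hdisj
  rw [IndepFun_iff_Indep]
  exact indep_of_indep_of_le_right
    (indep_of_indep_of_le_left h (le_biSup (fun i => (strongMS H).comap (Ψ i)) rfl))
    (measurable_iff_comap_le.mp (measurable_residualProd_apply_iSup_comap Ψ x n))

theorem measurable_residualProd_apply [TopologicalSpace.SeparableSpace H]
    {Ψ : ℕ → Ω → H →L[ℂ] H} (hΨ : ∀ k, Measurable[mΩ, strongMS H] (Ψ k)) (x : H) (n : ℕ) :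
    Measurable fun ω => residualProd Ψ ω n x :=
  (measurable_residualProd_apply_iSup_comap Ψ x n).mono
    (iSup₂_le fun i _ => (hΨ i).comap_le) le_rfl

end StrongMeasurability

section Coercivity

variable {Ω H : Type*} {mΩ : MeasurableSpace Ω} {μ : Measure Ω} [IsFiniteMeasure μ]
  [NormedAddCommGroup H] [InnerProductSpace ℂ H] [MeasurableSpace H] [BorelSpace H]
  [TopologicalSpace.SeparableSpace H]

theorem lintegral_enorm_apply_sq_ge_of_indepFun {T : Ω → H →L[ℂ] H} {Y : Ω → H}
    (hT : Measurable[mΩ, strongMS H] T) (hY : Measurable Y)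
    (hTY : @IndepFun Ω _ _ _ (strongMS H) _ T Y μ) {c : ℝ≥0∞}
    (hcoer : ∀ y, c * ‖y‖ₑ ^ 2 ≤ ∫⁻ ω, ‖T ω y‖ₑ ^ 2 ∂μ) :
    c * ∫⁻ ω, ‖Y ω‖ₑ ^ 2 ∂μ ≤ ∫⁻ ω, ‖T ω (Y ω)‖ₑ ^ 2 ∂μ := by
  let := strongMS H
  have hf : Measurable fun p : (H →L[ℂ] H) × H => ‖p.1 p.2‖ₑ ^ 2 :=
    measurable_apply_prod_strongMS.enorm.pow_const 2
  calc c * ∫⁻ ω, ‖Y ω‖ₑ ^ 2 ∂μ = ∫⁻ ω, c * ‖Y ω‖ₑ ^ 2 ∂μ :=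
        (lintegral_const_mul c (hY.enorm.pow_const 2)).symm
    _ = ∫⁻ y, c * ‖y‖ₑ ^ 2 ∂(μ.map Y) :=
        (lintegral_map ((measurable_enorm.pow_const 2).const_mul c) hY).symm
    _ ≤ ∫⁻ y, ∫⁻ ω, ‖T ω y‖ₑ ^ 2 ∂μ ∂(μ.map Y) := lintegral_mono hcoer
    _ = ∫⁻ ω, ‖T ω (Y ω)‖ₑ ^ 2 ∂μ :=
        (hTY.lintegral_comp_eq_lintegral_map_lintegral hT hY hf).symm

variable [CompleteSpace H] {Ψ : ℕ → Ω → H →L[ℂ] H}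

theorem lintegral_enorm_residualProd_apply_sq_succ_le
    (hΨ : ∀ k, Measurable[mΩ, strongMS H] (Ψ k))
    (hpos : ∀ k ω, 0 ≤ Ψ k ω) (hcontr : ∀ k ω, Ψ k ω ≤ 1)
    (hindep : iIndepFun (m := fun _ : ℕ => strongMS H) Ψ μ) {c : ℝ≥0∞}
    (hcoer : ∀ k (y : H), c * ‖y‖ₑ ^ 2 ≤ ∫⁻ ω, ‖Ψ k ω y‖ₑ ^ 2 ∂μ) (x : H) (n : ℕ) :
    ∫⁻ ω, ‖residualProd Ψ ω (n + 1) x‖ₑ ^ 2 ∂μ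
      ≤ (1 - c) * ∫⁻ ω, ‖residualProd Ψ ω n x‖ₑ ^ 2 ∂μ := by
  have hpythagoras ω : ‖residualProd Ψ ω (n + 1) x‖ₑ ^ 2
      + ‖Ψ (n + 1) ω (residualProd Ψ ω n x)‖ₑ ^ 2 ≤ ‖residualProd Ψ ω n x‖ₑ ^ 2 := by
    rw [residualProd_succ_apply]
    simp only [← ofReal_norm, ← ENNReal.ofReal_pow (norm_nonneg _)]
    rw [← ENNReal.ofReal_add (by positivity) (by positivity)]
    exact ENNReal.ofReal_le_ofReal
      (ContinuousLinearMap.norm_one_sub_apply_sq_add_norm_apply_sq_le (hpos _ _) (hcontr _ _) _)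
  refine ENNReal.le_one_sub_mul_of_add_le_of_mul_le ?_
    (lintegral_enorm_apply_sq_ge_of_indepFun (hΨ _) (measurable_residualProd_apply hΨ x n)
      (indepFun_residualProd_apply hΨ hindep x n) (hcoer (n + 1)))
    (lintegral_enorm_residualProd_apply_sq_ne_top μ hpos hcontr x n)
  rw [← lintegral_add_left ((measurable_residualProd_apply hΨ x (n + 1)).enorm.pow_const 2)]
  exact lintegral_mono hpythagoras

theorem lintegral_enorm_residualProd_apply_sq_le [IsProbabilityMeasure μ]
    (hΨ : ∀ k, Measurable[mΩ, strongMS H] (Ψ k))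
    (hpos : ∀ k ω, 0 ≤ Ψ k ω) (hcontr : ∀ k ω, Ψ k ω ≤ 1)
    (hindep : iIndepFun (m := fun _ : ℕ => strongMS H) Ψ μ) {c : ℝ≥0∞}
    (hcoer : ∀ k (y : H), c * ‖y‖ₑ ^ 2 ≤ ∫⁻ ω, ‖Ψ k ω y‖ₑ ^ 2 ∂μ) (x : H) (n : ℕ) :
    ∫⁻ ω, ‖residualProd Ψ ω n x‖ₑ ^ 2 ∂μ ≤ (1 - c) ^ n * ‖x‖ₑ ^ 2 := by
  induction n with
  | zero => simp [residualProd_zero_apply]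
  | succ n ih =>
    calc _ ≤ (1 - c) * ∫⁻ ω, ‖residualProd Ψ ω n x‖ₑ ^ 2 ∂μ :=
          lintegral_enorm_residualProd_apply_sq_succ_le hΨ hpos hcontr hindep hcoer x n
      _ ≤ (1 - c) ^ (n + 1) * ‖x‖ₑ ^ 2 := by
          rw [pow_succ', mul_assoc]
          gcongr

end Coercivity

theorem tsum_prob_residual_gt_le_general
    {Ω : Type*} [MeasureSpace Ω] [IsProbabilityMeasure (ℙ : Measure Ω)]
    {H : Type*} [NormedAddCommGroup H] [InnerProductSpace ℂ H]
    [CompleteSpace H] [TopologicalSpace.SeparableSpace H]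
    [MeasurableSpace H] [BorelSpace H]
    (Ψ : ℕ → Ω → (H →L[ℂ] H))
    (hmeas : ∀ k, ∀ x : H, Measurable fun ω => Ψ k ω x)
    (hpos : ∀ k ω, 0 ≤ Ψ k ω) (hcontr : ∀ k ω, Ψ k ω ≤ 1)
    (hindep : iIndepFun (m := fun _ : ℕ => strongMS H) Ψ (ℙ : Measure Ω))
    (C : ℝ) (hC0 : 0 < C) (hC1 : C < 1)
    (hcoer : ∀ k, ∀ x : H, C * ‖x‖ ^ 2 ≤ ∫ ω : Ω, ‖Ψ k ω x‖ ^ 2 ∂(ℙ : Measure Ω))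
    (x : H) (δ : ℝ) (hδ : 0 < δ) :
    (∑' n : ℕ, (ℙ : Measure Ω) {ω | δ < ‖residualProd Ψ ω n x‖})
        ≤ ENNReal.ofReal (‖x‖ ^ 2 / (δ ^ 2 * C)) ∧
      (∑' n : ℕ, (ℙ : Measure Ω) {ω | δ < ‖residualProd Ψ ω n x‖}) < ⊤ := by
  have hΨ k : Measurable[_, strongMS H] (Ψ k) := measurable_strongMS_iff.mpr (hmeas k)
  set c := ENNReal.ofReal C
  have hcoer' k (y : H) : c * ‖y‖ₑ ^ 2 ≤ ∫⁻ ω, ‖Ψ k ω y‖ₑ ^ 2 := by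
    rw [← ofReal_norm, ← ENNReal.ofReal_pow (norm_nonneg _), ← ENNReal.ofReal_mul hC0.le]
    exact (ENNReal.ofReal_le_ofReal (hcoer k y)).trans
      (ofReal_integral_norm_sq_le_lintegral_enorm_sq (hmeas k y).aestronglyMeasurable)
  have hterm n : ℙ {ω | δ < ‖residualProd Ψ ω n x‖}
      ≤ (1 - c) ^ n * (‖x‖ₑ ^ 2 / ENNReal.ofReal δ ^ 2) := by
    refine (meas_lt_norm_le_lintegral_enorm_sq_div
      (measurable_residualProd_apply hΨ x n).aestronglyMeasurable hδ).trans ?_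
    rw [← mul_div_assoc]
    exact ENNReal.div_le_div_right
      (lintegral_enorm_residualProd_apply_sq_le hΨ hpos hcontr hindep hcoer' x n) _
  have hbound : (∑' n : ℕ, ℙ {ω | δ < ‖residualProd Ψ ω n x‖})
      ≤ ENNReal.ofReal (‖x‖ ^ 2 / (δ ^ 2 * C)) :=
    calc _ ≤ ∑' n : ℕ, (1 - c) ^ n * (‖x‖ₑ ^ 2 / ENNReal.ofReal δ ^ 2) :=
          ENNReal.tsum_le_tsum hterm
      _ = c⁻¹ * (‖x‖ₑ ^ 2 / ENNReal.ofReal δ ^ 2) := by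
        rw [ENNReal.tsum_mul_right, ENNReal.tsum_geometric,
          ENNReal.sub_sub_cancel ENNReal.one_ne_top (ENNReal.ofReal_le_one.mpr hC1.le)]
      _ = ENNReal.ofReal (‖x‖ ^ 2 / (δ ^ 2 * C)) := by
        rw [ENNReal.ofReal_div_of_pos (by positivity), ENNReal.ofReal_mul (by positivity),
          ENNReal.ofReal_pow (norm_nonneg _), ENNReal.ofReal_pow hδ.le, ofReal_norm,
          div_eq_mul_inv, div_eq_mul_inv, ENNReal.mul_inv (by simp) (by simp)]
        ring
  exact ⟨hbound, hbound.trans_lt ENNReal.ofReal_lt_top⟩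

/-- For an i.i.d. sequence `(Ψ_k)` of strongly measurable random positive
contractions satisfying the coercivity condition with `0 < C < 1`, for every `x ∈ H` and `δ > 0`
the series of tail probabilities satisfies
`Σ_{n=0}^∞ ℙ(‖R_n x‖ > δ) ≤ ‖x‖² / (δ² C) < ∞`. -/
theorem tsum_prob_residual_gt_le
    {Ω : Type*} [MeasureSpace Ω] [IsProbabilityMeasure (ℙ : Measure Ω)]
    {H : Type*} [NormedAddCommGroup H] [InnerProductSpace ℂ H]
    [CompleteSpace H] [TopologicalSpace.SeparableSpace H]
    [MeasurableSpace H] [BorelSpace H]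
    (Ψ : ℕ → Ω → (H →L[ℂ] H))
    (hmeas : ∀ k, ∀ x : H, Measurable fun ω => Ψ k ω x)
    (hpos : ∀ k ω, 0 ≤ Ψ k ω) (hcontr : ∀ k ω, Ψ k ω ≤ 1)
    (hindep : iIndepFun (m := fun _ : ℕ => strongMS H) Ψ (ℙ : Measure Ω))
    (hident : ∀ i j : ℕ,
      @IdentDistrib Ω Ω (H →L[ℂ] H) _ _ (strongMS H) (Ψ i) (Ψ j) ℙ ℙ)
    (C : ℝ) (hC0 : 0 < C) (hC1 : C < 1)
    (hcoer : ∀ k, ∀ x : H, C * ‖x‖ ^ 2 ≤ ∫ ω : Ω, ‖Ψ k ω x‖ ^ 2 ∂(ℙ : Measure Ω))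
    (x : H) (δ : ℝ) (hδ : 0 < δ) :
    (∑' n : ℕ, (ℙ : Measure Ω) {ω | δ < ‖residualProd Ψ ω n x‖})
        ≤ ENNReal.ofReal (‖x‖ ^ 2 / (δ ^ 2 * C)) ∧
      (∑' n : ℕ, (ℙ : Measure Ω) {ω | δ < ‖residualProd Ψ ω n x‖}) < ⊤ :=
  tsum_prob_residual_gt_le_general Ψ hmeas hpos hcontr hindep C hC0 hC1 hcoer x δ hδ
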